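/- Let C ∈ ℝ^{n×n} be symmetric with zero diagonal, β ∈ [0,1), and δ > 0. Let V* ∈ ℝ^{k×n} be feasible with Σ_{j≠i} c_{ij} v*_j = −y*_i v*_i and y*_i = ‖Σ_{j≠i} c_{ij} v*_j‖₂ > 0 for all i, such that C + diag(y*) is positive semidefinite; set f* = f(V*). Then there exists a constant τ > 0, depending only on C, β, and δ, such that for every feasible V whose pass of Mixing Method++ is well-defined and satisfies y_i ≥ δ for all i (with associated y, w), one has Σ_{i=1}^n ((w_i + β) y_i − (1+β) y*_i)² ≤ τ · (f(V) − f*). -/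

import Mathlib

open Matrix Finset
open scoped BigOperators RealInnerProductSpace

/-!
Put `A = C + diag y*`. The fixed-point equations say `A V* = 0`, so for feasible `V` the gap
`f(V) - f*` is the pairing `∑ A_ij ⟪v_i, v_j⟫`; writing the PSD matrix `A` as `∑ b bᵀ` shows that
it is nonnegative and that the residuals `r_i = ∑_j A_ij v_j` satisfy
`∑ ‖r_i‖² ≤ (∑ b²) · (f(V) - f*)`.

Along the pass, `d_i = g_i + y*_i v_i` is `r_i + ∑_{j<i} c_ij (v̂_j - v_j)`, and because `y_i ≥ δ`
the update moves `v_j` by at most `2(1+2β)/δ · ‖d_j‖`; a discrete Grönwall argument then bounds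
every `‖d_i‖` by a fixed multiple of `∑ ‖r_j‖`. Finally `|(w_i + β) y_i - (1+β) y*_i|` is at most
`(1+3β) ‖d_i‖`, and Cauchy–Schwarz turns the sum of squares into a multiple of `∑ ‖r_j‖²`.
-/

/-- The SDP objective `f(W) = trace(C Wᵀ W) = ∑ i j, C i j ⟨w_i, w_j⟩`, expressed
in terms of the columns `w_1, …, w_n` of `W`. -/
noncomputable def obj {n k : ℕ} (C : Matrix (Fin n) (Fin n) ℝ)
    (V : Fin n → EuclideanSpace ℝ (Fin k)) : ℝ :=
  ∑ i, ∑ j, C i j * ⟪V i, V j⟫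

section RowCombination

variable {ι E : Type*} [Fintype ι] [AddCommGroup E] [Module ℝ E]

noncomputable def rowCombination (A : Matrix ι ι ℝ) (v : ι → E) (i : ι) : E :=
  ∑ j, A i j • v j

lemma rowCombination_add_diagonal [DecidableEq ι] (C : Matrix ι ι ℝ) (t : ι → ℝ) (v : ι → E)
    (i : ι) : rowCombination (C + diagonal t) v i = rowCombination C v i + t i • v i := by
  simp [rowCombination, add_smul, sum_add_distrib, diagonal_apply, ite_smul]

variable {C : Matrix ι ι ℝ} {v : ι → E} {i : ι}

lemma sum_filter_ne_eq_rowCombination [DecidableEq ι] (hCii : C i i = 0) :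
    ∑ j ∈ univ.filter (· ≠ i), C i j • v j = rowCombination C v i :=
  sum_filter_of_ne fun j _ h => by rintro rfl; exact h (by rw [hCii, zero_smul])

variable [LinearOrder ι]

lemma sum_lt_add_sum_gt_eq_rowCombination (hCii : C i i = 0) :
    ∑ j ∈ univ.filter (· < i), C i j • v j + ∑ j ∈ univ.filter (i < ·), C i j • v j =
      rowCombination C v i := by
  rw [← sum_filter_ne_eq_rowCombination hCii,
    ← sum_union (disjoint_filter.2 fun j _ h h' => lt_asymm h h')]
  congr 1
  ext j
  simp only [mem_union, mem_filter, mem_univ, true_and]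
  exact lt_or_lt_iff_ne

lemma add_smul_eq_rowCombination_add_sum_lt {Vh g : ι → E} {t : ι → ℝ} (hCii : C i i = 0)
    (hg : g i = ∑ j ∈ univ.filter (· < i), C i j • Vh j + ∑ j ∈ univ.filter (i < ·), C i j • v j) :
    g i + t i • v i =
      rowCombination (C + diagonal t) v i + ∑ j ∈ univ.filter (· < i), C i j • (Vh j - v j) := by
  rw [rowCombination_add_diagonal, ← sum_lt_add_sum_gt_eq_rowCombination hCii, hg]
  simp only [smul_sub, sum_sub_distrib]
  abel

end RowCombination

section Gram

variable {ι E : Type*} [Fintype ι] [NormedAddCommGroup E] [InnerProductSpace ℝ E]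

noncomputable def gramPairing (A : Matrix ι ι ℝ) (v : ι → E) : ℝ :=
  ∑ i, ∑ j, A i j * ⟪v i, v j⟫

lemma gramPairing_eq_sum_inner_rowCombination (A : Matrix ι ι ℝ) (v : ι → E) :
    gramPairing A v = ∑ i, ⟪v i, rowCombination A v i⟫ := by
  simp only [gramPairing, rowCombination, inner_sum, real_inner_smul_right]

lemma gramPairing_eq_zero_of_rowCombination_eq_zero {A : Matrix ι ι ℝ} {v : ι → E}
    (h : ∀ i, rowCombination A v i = 0) : gramPairing A v = 0 := by
  simp [gramPairing_eq_sum_inner_rowCombination, h]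

lemma gramPairing_add_diagonal [DecidableEq ι] (C : Matrix ι ι ℝ) (t : ι → ℝ) (v : ι → E) :
    gramPairing (C + diagonal t) v = gramPairing C v + ∑ i, t i * ‖v i‖ ^ 2 := by
  simp [gramPairing, add_mul, sum_add_distrib, diagonal_apply, ite_mul]

lemma gramPairing_sum_vecMulVec {m : ℕ} (b : Fin m → ι → ℝ) (v : ι → E) :
    gramPairing (∑ l, vecMulVec (b l) (b l)) v = ∑ l, ‖∑ i, b l i • v i‖ ^ 2 := by
  simp only [gramPairing, ← real_inner_self_eq_norm_sq, sum_inner, inner_sum,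
    real_inner_smul_left, real_inner_smul_right, Matrix.sum_apply, vecMulVec_apply,
    sum_mul, mul_assoc]
  rw [sum_comm]
  refine (sum_congr rfl fun j _ => sum_comm).trans ?_
  rw [sum_comm]
  exact sum_congr rfl fun l _ => sum_congr rfl fun j _ => sum_congr rfl fun i _ => by ring

lemma rowCombination_sum_vecMulVec {m : ℕ} (b : Fin m → ι → ℝ) (v : ι → E) (i : ι) :
    rowCombination (∑ l, vecMulVec (b l) (b l)) v i = ∑ l, b l i • ∑ j, b l j • v j := by
  simp only [rowCombination, Matrix.sum_apply, vecMulVec_apply, sum_smul,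
    smul_sum, smul_smul]
  exact sum_comm

end Gram

lemma norm_sum_smul_sq_le {κ E : Type*} [NormedAddCommGroup E] [NormedSpace ℝ E]
    (s : Finset κ) (b : κ → ℝ) (w : κ → E) :
    ‖∑ l ∈ s, b l • w l‖ ^ 2 ≤ (∑ l ∈ s, b l ^ 2) * ∑ l ∈ s, ‖w l‖ ^ 2 := by
  calc ‖∑ l ∈ s, b l • w l‖ ^ 2 ≤ (∑ l ∈ s, |b l| * ‖w l‖) ^ 2 := by
        gcongr
        exact (norm_sum_le _ _).trans_eq (by simp [norm_smul])
    _ ≤ (∑ l ∈ s, |b l| ^ 2) * ∑ l ∈ s, ‖w l‖ ^ 2 := sum_mul_sq_le_sq_mul_sq _ _ _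
    _ = _ := by simp

namespace Matrix.PosSemidef

variable {ι E : Type*} [Fintype ι] [NormedAddCommGroup E] [InnerProductSpace ℝ E]
  {A : Matrix ι ι ℝ}

lemma gramPairing_nonneg (hA : A.PosSemidef) (v : ι → E) : 0 ≤ gramPairing A v := by
  obtain ⟨m, b, rfl⟩ := posSemidef_iff_eq_sum_vecMulVec.mp hA
  simp only [star_trivial]
  rw [gramPairing_sum_vecMulVec]
  positivity

lemma exists_sum_norm_rowCombination_sq_le (hA : A.PosSemidef) :
    ∃ F, 0 ≤ F ∧ ∀ v : ι → E, ∑ i, ‖rowCombination A v i‖ ^ 2 ≤ F * gramPairing A v := by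
  obtain ⟨m, b, rfl⟩ := posSemidef_iff_eq_sum_vecMulVec.mp hA
  simp only [star_trivial]
  refine ⟨∑ i, ∑ l, b l i ^ 2, by positivity, fun v => ?_⟩
  rw [gramPairing_sum_vecMulVec, sum_mul]
  gcongr with i
  rw [rowCombination_sum_vecMulVec]
  exact norm_sum_smul_sq_le _ _ _

end Matrix.PosSemidef

section MomentumStep

variable {E : Type*} [NormedAddCommGroup E] [NormedSpace ℝ E]

noncomputable def momentumDir (β : ℝ) (v g : E) : E :=
  (1 + β) • -(‖g‖⁻¹ • g) - β • v

noncomputable def momentumStep (β : ℝ) (v g : E) : E :=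
  ‖momentumDir β v g‖⁻¹ • momentumDir β v g

variable {β t : ℝ} {u v g : E}

lemma abs_norm_sub_le_norm_add_smul (hv : ‖v‖ = 1) (ht : 0 ≤ t) : |‖g‖ - t| ≤ ‖g + t • v‖ := by
  simpa [norm_smul, hv, abs_of_nonneg ht] using abs_norm_sub_norm_le g (-(t • v))

lemma norm_neg_normalize_sub_le (hv : ‖v‖ = 1) (ht : 0 ≤ t) (hg : g ≠ 0) :
    ‖-(‖g‖⁻¹ • g) - v‖ ≤ 2 * ‖g + t • v‖ / ‖g‖ := by
  have hg' : 0 < ‖g‖ := norm_pos_iff.mpr hg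
  have hsplit : -(‖g‖⁻¹ • g) - v = -(‖g‖⁻¹ • ((g + t • v) + (‖g‖ - t) • v)) := by
    rw [add_assoc, ← add_smul, add_sub_cancel, smul_add, smul_smul, inv_mul_cancel₀ hg'.ne',
      one_smul, neg_add, sub_eq_add_neg]
  have hle : ‖(g + t • v) + (‖g‖ - t) • v‖ ≤ 2 * ‖g + t • v‖ := by
    calc _ ≤ ‖g + t • v‖ + |‖g‖ - t| := by
          simpa [norm_smul, hv] using norm_add_le (g + t • v) ((‖g‖ - t) • v)
      _ ≤ 2 * ‖g + t • v‖ := by linarith [abs_norm_sub_le_norm_add_smul (g := g) hv ht]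
  rw [hsplit, norm_neg, norm_smul, norm_inv, norm_norm, inv_mul_eq_div]
  gcongr

lemma one_le_norm_extrapolate (hu : ‖u‖ = 1) (hv : ‖v‖ = 1) (hβ : 0 ≤ β) :
    1 ≤ ‖(1 + β) • u - β • v‖ := by
  have := norm_sub_norm_le ((1 + β) • u) (β • v)
  rw [norm_smul, norm_smul, hu, hv, Real.norm_of_nonneg hβ, Real.norm_of_nonneg (by linarith)]
    at this
  linarith

lemma norm_normalize_extrapolate_sub_le (hu : ‖u‖ = 1) (hv : ‖v‖ = 1) (hβ : 0 ≤ β) :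
    ‖‖(1 + β) • u - β • v‖⁻¹ • ((1 + β) • u - β • v) - v‖ ≤ (1 + 2 * β) * ‖u - v‖ := by
  set z := (1 + β) • u - β • v
  have hz : 1 ≤ ‖z‖ := one_le_norm_extrapolate hu hv hβ
  have hzu : z - u = β • (u - v) := by
    simp only [z, add_smul, one_smul, smul_sub]; abel
  have hzu' : ‖z - u‖ = β * ‖u - v‖ := by rw [hzu, norm_smul, Real.norm_of_nonneg hβ]
  have hnorm : ‖‖z‖⁻¹ • z - z‖ = ‖z‖ - 1 := by
    have hz0 : 0 < ‖z‖ := one_pos.trans_le hz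
    rw [show ‖z‖⁻¹ • z - z = (‖z‖⁻¹ - 1) • z by rw [sub_smul, one_smul], norm_smul,
      Real.norm_eq_abs,
      abs_of_nonpos (by simpa using inv_le_one_of_one_le₀ hz)]
    field_simp
    ring
  have hz1 : ‖z‖ - 1 ≤ ‖z - u‖ := by
    simpa [hu] using norm_sub_norm_le z u
  calc ‖‖z‖⁻¹ • z - v‖ ≤ ‖‖z‖⁻¹ • z - z‖ + ‖z - u‖ + ‖u - v‖ :=
        (norm_sub_le_norm_sub_add_norm_sub _ u _).trans
          (by gcongr; exact norm_sub_le_norm_sub_add_norm_sub _ _ _)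
    _ ≤ _ := by linarith

lemma norm_momentumStep_sub_le (hv : ‖v‖ = 1) (ht : 0 ≤ t) (hβ : 0 ≤ β) (hg : g ≠ 0) :
    ‖momentumStep β v g - v‖ ≤ 2 * (1 + 2 * β) * ‖g + t • v‖ / ‖g‖ :=
  calc ‖momentumStep β v g - v‖ ≤ (1 + 2 * β) * ‖-(‖g‖⁻¹ • g) - v‖ :=
        norm_normalize_extrapolate_sub_le (by simpa using norm_smul_inv_norm (𝕜 := ℝ) hg) hv hβ
    _ ≤ (1 + 2 * β) * (2 * ‖g + t • v‖ / ‖g‖) := by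
        gcongr; exact norm_neg_normalize_sub_le hv ht hg
    _ = _ := by ring

lemma abs_norm_momentumDir_add_mul_sub_le (hv : ‖v‖ = 1) (ht : 0 ≤ t) (hβ : 0 ≤ β)
    (hg : g ≠ 0) :
    |(‖momentumDir β v g‖ + β) * ‖g‖ - (1 + β) * t| ≤ (1 + 3 * β) * ‖g + t • v‖ := by
  set d := g + t • v
  set s := β * ‖g‖ - (1 + β) * t
  have hscale : ‖momentumDir β v g‖ * ‖g‖ = ‖(1 + β) • d + s • v‖ := by
    have : ‖g‖ • momentumDir β v g = -((1 + β) • d + s • v) := by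
      have hunit : ‖g‖ • (1 + β) • -(‖g‖⁻¹ • g) = -((1 + β) • g) := by
        rw [smul_neg, smul_neg, smul_comm, smul_inv_smul₀ (norm_ne_zero_iff.mpr hg)]
      rw [momentumDir, smul_sub, hunit]
      module
    rw [mul_comm, ← Real.norm_of_nonneg (norm_nonneg g), ← norm_smul, this, norm_neg]
  have hnear : |‖(1 + β) • d + s • v‖ - (|s|)| ≤ (1 + β) * ‖d‖ := by
    simpa [norm_smul, hv, abs_of_nonneg (by linarith : 0 ≤ 1 + β)] using
      abs_norm_sub_norm_le ((1 + β) • d + s • v) (s • v)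
  have hs : s ≤ β * ‖d‖ := by
    have := (le_abs_self _).trans (abs_norm_sub_le_norm_add_smul (g := g) hv ht)
    nlinarith
  rw [add_mul, hscale, add_sub_assoc]
  have hd := norm_nonneg d
  rcases le_or_gt s 0 with hs0 | hs0
  · rw [abs_of_nonpos hs0] at hnear
    rw [abs_le] at hnear ⊢
    constructor <;> nlinarith
  · rw [abs_of_pos hs0] at hnear
    rw [abs_le] at hnear ⊢
    constructor <;> nlinarith

lemma Fin.le_pow_mul_of_le_add_mul_sum_lt {n : ℕ} {x : Fin n → ℝ} {R a : ℝ} (ha : 0 ≤ a)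
    (hx : ∀ i, x i ≤ R + a * ∑ j ∈ univ.filter (· < i), x j) (i : Fin n) :
    x i ≤ (1 + a) ^ (i : ℕ) * R := by
  induction i using WellFoundedLT.induction with
  | _ i ih =>
    have hgeom : a * ∑ j ∈ univ.filter (· < i), (1 + a) ^ (j : ℕ) = (1 + a) ^ (i : ℕ) - 1 := by
      have hrange : ∑ j ∈ Iio i, (1 + a) ^ (j : ℕ) = ∑ m ∈ range i, (1 + a) ^ m := by
        rw [← Nat.Iio_eq_range, ← Fin.map_valEmbedding_Iio, sum_map]
        rfl
      rw [filter_gt_eq_Iio, hrange, mul_comm, ← geom_sum_mul, add_sub_cancel_left]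
    calc x i ≤ R + a * ∑ j ∈ univ.filter (· < i), (1 + a) ^ (j : ℕ) * R := by
          refine (hx i).trans ?_
          gcongr with j hj
          exact ih j (mem_filter.mp hj).2
      _ = (1 + a) ^ (i : ℕ) * R := by rw [← sum_mul, ← mul_assoc, hgeom]; ring

lemma sum_sq_le_of_abs_le_mul_sum {ι : Type*} [Fintype ι] {t s : ι → ℝ} {M : ℝ}
    (h : ∀ i, |t i| ≤ M * ∑ j, s j) :
    ∑ i, t i ^ 2 ≤ Fintype.card ι ^ 2 * M ^ 2 * ∑ j, s j ^ 2 := by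
  calc ∑ i, t i ^ 2 ≤ ∑ _i : ι, (M * ∑ j, s j) ^ 2 := by
        refine sum_le_sum fun i _ => ?_
        rw [← sq_abs]
        exact pow_le_pow_left₀ (abs_nonneg _) (h i) 2
    _ = Fintype.card ι * M ^ 2 * (∑ j, s j) ^ 2 := by rw [sum_const, card_univ, nsmul_eq_mul]; ring
    _ ≤ Fintype.card ι * M ^ 2 * (Fintype.card ι * ∑ j, s j ^ 2) := by
        gcongr; exact sq_sum_le_card_mul_sum_sq
    _ = _ := by ring

lemma norm_add_smul_le_add_mul_sum_lt {ι E : Type*} [Fintype ι] [LinearOrder ι]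
    [NormedAddCommGroup E] [NormedSpace ℝ E] {C : Matrix ι ι ℝ} {V Vh g : ι → E} {t : ι → ℝ}
    {K M : ℝ} {i : ι} (hCii : C i i = 0)
    (hg : g i = ∑ j ∈ univ.filter (· < i), C i j • Vh j + ∑ j ∈ univ.filter (i < ·), C i j • V j)
    (hstep : ∀ j, ‖Vh j - V j‖ ≤ K * ‖g j + t j • V j‖) (hM : ∀ j, |C i j| ≤ M) :
    ‖g i + t i • V i‖ ≤ ‖rowCombination (C + diagonal t) V i‖ +
      M * K * ∑ j ∈ univ.filter (· < i), ‖g j + t j • V j‖ := by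
  rw [add_smul_eq_rowCombination_add_sum_lt hCii hg, mul_sum]
  refine (norm_add_le _ _).trans ?_
  gcongr
  refine (norm_sum_le _ _).trans ?_
  gcongr with j
  rw [norm_smul, Real.norm_eq_abs, mul_assoc]
  exact mul_le_mul (hM j) (hstep j) (norm_nonneg _) ((abs_nonneg _).trans (hM j))

lemma abs_le_sum_sum_abs {ι : Type*} [Fintype ι] (C : Matrix ι ι ℝ) (i j : ι) :
    |C i j| ≤ ∑ i, ∑ j, |C i j| :=
  (single_le_sum (fun j _ => abs_nonneg (C i j)) (mem_univ j)).trans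
    (single_le_sum (f := fun i => ∑ j, |C i j|) (fun _ _ => sum_nonneg fun _ _ => abs_nonneg _)
      (mem_univ i))

lemma abs_momentum_scale_sub_le {n : ℕ} {E : Type*} [NormedAddCommGroup E] [NormedSpace ℝ E]
    {C : Matrix (Fin n) (Fin n) ℝ} (hCdiag : ∀ i, C i i = 0) {β δ : ℝ} (hβ : 0 ≤ β)
    (hδ : 0 < δ) {t : Fin n → ℝ} (ht : ∀ i, 0 ≤ t i) {V g : Fin n → E} (hV : ∀ i, ‖V i‖ = 1)
    (hgδ : ∀ i, δ ≤ ‖g i‖)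
    (hg : ∀ i, g i = ∑ j ∈ univ.filter (· < i), C i j • momentumStep β (V j) (g j) +
      ∑ j ∈ univ.filter (i < ·), C i j • V j) (i : Fin n) :
    |(‖momentumDir β (V i) (g i)‖ + β) * ‖g i‖ - (1 + β) * t i| ≤
      (1 + 3 * β) * (1 + (∑ i, ∑ j, |C i j|) * (2 * (1 + 2 * β) / δ)) ^ n *
        ∑ j, ‖rowCombination (C + diagonal t) V j‖ := by
  set R := ∑ j, ‖rowCombination (C + diagonal t) V j‖
  set K := 2 * (1 + 2 * β) / δ
  set a := (∑ i, ∑ j, |C i j|) * K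
  have hg0 (j : Fin n) : g j ≠ 0 := norm_pos_iff.mp (hδ.trans_le (hgδ j))
  have hstep (j : Fin n) : ‖momentumStep β (V j) (g j) - V j‖ ≤ K * ‖g j + t j • V j‖ := by
    refine (norm_momentumStep_sub_le (hV j) (ht j) hβ (hg0 j)).trans ?_
    rw [div_mul_eq_mul_div]
    gcongr
    exact hgδ j
  have hrec (j : Fin n) :
      ‖g j + t j • V j‖ ≤ R + a * ∑ l ∈ univ.filter (· < j), ‖g l + t l • V l‖ :=
    (norm_add_smul_le_add_mul_sum_lt (hCdiag j) (hg j) hstep (abs_le_sum_sum_abs C j)).trans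
      (by gcongr; exact single_le_sum (fun j _ => norm_nonneg _) (mem_univ j))
  have ha : 0 ≤ a :=
    mul_nonneg (sum_nonneg fun _ _ => sum_nonneg fun _ _ => abs_nonneg _) (by positivity)
  calc _ ≤ (1 + 3 * β) * ‖g i + t i • V i‖ :=
        abs_norm_momentumDir_add_mul_sub_le (hV i) (ht i) hβ (hg0 i)
    _ ≤ (1 + 3 * β) * ((1 + a) ^ (i : ℕ) * R) := by
        gcongr; exact Fin.le_pow_mul_of_le_add_mul_sum_lt ha hrec i
    _ ≤ (1 + 3 * β) * (1 + a) ^ n * R := by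
        have hR : 0 ≤ R := sum_nonneg fun j _ => norm_nonneg _
        rw [mul_assoc]
        gcongr
        · linarith
        · exact i.isLt.le

lemma obj_sub_obj_eq_gramPairing {n k : ℕ} {C : Matrix (Fin n) (Fin n) ℝ}
    (hCdiag : ∀ i, C i i = 0) {Vstar V : Fin n → EuclideanSpace ℝ (Fin k)} {ystar : Fin n → ℝ}
    (hVstar : ∀ i, ‖Vstar i‖ = 1)
    (hfixstar : ∀ i, ∑ j ∈ univ.filter (· ≠ i), C i j • Vstar j = -(ystar i • Vstar i))
    (hV : ∀ i, ‖V i‖ = 1) :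
    obj C V - obj C Vstar = gramPairing (C + diagonal ystar) V := by
  have hstar : gramPairing (C + diagonal ystar) Vstar = 0 :=
    gramPairing_eq_zero_of_rowCombination_eq_zero fun i => by
      rw [rowCombination_add_diagonal, ← sum_filter_ne_eq_rowCombination (hCdiag i), hfixstar,
        neg_add_cancel]
  rw [gramPairing_add_diagonal] at hstar ⊢
  simp only [hV, hVstar, one_pow, mul_one] at hstar ⊢
  change gramPairing C V - gramPairing C Vstar = _
  linarith

theorem mixing_pp_delta_bound_general {n k : ℕ}
    (C : Matrix (Fin n) (Fin n) ℝ) (hCdiag : ∀ i, C i i = 0)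
    (β : ℝ) (hβ0 : 0 ≤ β) (δ : ℝ) (hδ : 0 < δ)
    -- the optimum `V*` with its dual-feasible vector `y*`
    (Vstar : Fin n → EuclideanSpace ℝ (Fin k)) (ystar : Fin n → ℝ)
    (hVstar : ∀ i, ‖Vstar i‖ = 1) (hystarpos : ∀ i, 0 < ystar i)
    (hfixstar : ∀ i, (∑ j ∈ Finset.univ.filter (fun j => j ≠ i), C i j • Vstar j) =
        -(ystar i • Vstar i))
    (hdualpsd : (C + Matrix.diagonal ystar).PosSemidef) :
    ∃ τ : ℝ, 0 < τ ∧
      ∀ (V Vh g u : Fin n → EuclideanSpace ℝ (Fin k)) (y w : Fin n → ℝ),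
        (∀ i, ‖V i‖ = 1) →
        (∀ i, g i = (∑ j ∈ Finset.univ.filter (fun j => j < i), C i j • Vh j) +
                    ∑ j ∈ Finset.univ.filter (fun j => i < j), C i j • V j) →
        (∀ i, y i = ‖g i‖) → (∀ i, 0 < y i) → (∀ i, δ ≤ y i) →
        (∀ i, u i = -((y i)⁻¹ • g i)) →
        (∀ i, w i = ‖(1 + β) • u i - β • V i‖) →
        (∀ i, Vh i = (w i)⁻¹ • ((1 + β) • u i - β • V i)) →
        ∑ i, ((w i + β) * y i - (1 + β) * ystar i) ^ 2 ≤
          τ * (obj C V - obj C Vstar) := by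
  set A := C + diagonal ystar
  obtain ⟨F, hF0, hF⟩ :=
    hdualpsd.exists_sum_norm_rowCombination_sq_le (E := EuclideanSpace ℝ (Fin k))
  set M := (1 + 3 * β) * (1 + (∑ i, ∑ j, |C i j|) * (2 * (1 + 2 * β) / δ)) ^ n
  refine ⟨n ^ 2 * M ^ 2 * F + 1, add_pos_of_nonneg_of_pos (by positivity) one_pos, ?_⟩
  intro V Vh g u y w hV hg hy _ hyδ hu hw hVh
  have hVh' (j : Fin n) : Vh j = momentumStep β (V j) (g j) := by rw [hVh, hw, hu, hy]; rfl
  have hdev (i : Fin n) :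
      |(w i + β) * y i - (1 + β) * ystar i| ≤ M * ∑ j, ‖rowCombination A V j‖ := by
    rw [hw, hu, hy]
    exact abs_momentum_scale_sub_le hCdiag hβ0 hδ (fun i => (hystarpos i).le) hV
      (fun i => hy i ▸ hyδ i) (fun i => by simpa only [hVh'] using hg i) i
  have hQ := hdualpsd.gramPairing_nonneg V
  calc ∑ i, ((w i + β) * y i - (1 + β) * ystar i) ^ 2
      ≤ n ^ 2 * M ^ 2 * ∑ j, ‖rowCombination A V j‖ ^ 2 := by
        simpa using sum_sq_le_of_abs_le_mul_sum hdev
    _ ≤ n ^ 2 * M ^ 2 * (F * gramPairing A V) := by gcongr; exact hF V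
    _ ≤ (n ^ 2 * M ^ 2 * F + 1) * gramPairing A V := by nlinarith
    _ = _ := by rw [obj_sub_obj_eq_gramPairing hCdiag hVstar hfixstar hV]

/-- Lemma 4 of the paper: there is a constant `τ > 0` such that for every feasible `V`
whose pass of Mixing Method++ is well-defined with `y_i ≥ δ`,
`∑ i, ((w_i + β) y_i - (1+β) y*_i)² ≤ τ (f(V) - f*)`. -/
theorem mixing_pp_delta_bound {n k : ℕ}
    (C : Matrix (Fin n) (Fin n) ℝ) (hC : C.IsSymm) (hCdiag : ∀ i, C i i = 0)
    (β : ℝ) (hβ0 : 0 ≤ β) (hβ1 : β < 1) (δ : ℝ) (hδ : 0 < δ)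
    -- the optimum `V*` with its dual-feasible vector `y*`
    (Vstar : Fin n → EuclideanSpace ℝ (Fin k)) (ystar : Fin n → ℝ)
    (hVstar : ∀ i, ‖Vstar i‖ = 1) (hystarpos : ∀ i, 0 < ystar i)
    (hystar : ∀ i, ystar i = ‖∑ j ∈ Finset.univ.filter (fun j => j ≠ i), C i j • Vstar j‖)
    (hfixstar : ∀ i, (∑ j ∈ Finset.univ.filter (fun j => j ≠ i), C i j • Vstar j) =
        -(ystar i • Vstar i))
    (hdualpsd : (C + Matrix.diagonal ystar).PosSemidef) :
    ∃ τ : ℝ, 0 < τ ∧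
      ∀ (V Vh g u : Fin n → EuclideanSpace ℝ (Fin k)) (y w : Fin n → ℝ),
        (∀ i, ‖V i‖ = 1) →
        (∀ i, g i = (∑ j ∈ Finset.univ.filter (fun j => j < i), C i j • Vh j) +
                    ∑ j ∈ Finset.univ.filter (fun j => i < j), C i j • V j) →
        (∀ i, y i = ‖g i‖) → (∀ i, 0 < y i) → (∀ i, δ ≤ y i) →
        (∀ i, u i = -((y i)⁻¹ • g i)) →
        (∀ i, w i = ‖(1 + β) • u i - β • V i‖) →
        (∀ i, Vh i = (w i)⁻¹ • ((1 + β) • u i - β • V i)) →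
        ∑ i, ((w i + β) * y i - (1 + β) * ystar i) ^ 2 ≤
          τ * (obj C V - obj C Vstar) :=
  mixing_pp_delta_bound_general C hCdiag β hβ0 δ hδ Vstar ystar hVstar hystarpos hfixstar hdualpsd
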